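/- arXiv:2409.09471 — 4 statements merged into one kernel-verified Lean document; each statement's English description precedes it below -/
import Mathlib

section
/- Let M ∈ ℝ^{n×k}, b ∈ ℝⁿ, and ε ∈ [0,1). Let S ∈ ℝ^{s×n} be an ε-subspace embedding for the subspace V of ℝⁿ spanned by the columns of M together with b. If y* ∈ ℝ^k minimizes y ↦ ‖S(M y − b)‖₂ over ℝ^k, then ‖M y* − b‖₂ ≤ √((1+ε)/(1−ε)) · min_{y ∈ ℝ^k} ‖M y − b‖₂. -/
open Matrix

/-- The Euclidean norm of a vector in `ℝ^n`. -/
noncomputable def euclNorm {n : ℕ} (v : Fin n → ℝ) : ℝ := Real.sqrt (∑ i, v i ^ 2)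

lemma euclNorm_nonneg {n : ℕ} (v : Fin n → ℝ) : 0 ≤ euclNorm v := Real.sqrt_nonneg _

lemma euclNorm_sq {n : ℕ} (v : Fin n → ℝ) : euclNorm v ^ 2 = ∑ i, v i ^ 2 := by
  rw [euclNorm, Real.sq_sqrt]
  exact Finset.sum_nonneg fun i _ => sq_nonneg _

lemma residual_mem {n k : ℕ} (M : Matrix (Fin n) (Fin k) ℝ) (b : Fin n → ℝ)
    (y : Fin k → ℝ) :
    M.mulVec y - b ∈ Submodule.span ℝ ((Set.range fun j i => M i j) ∪ {b}) := by
  have hb : b ∈ Submodule.span ℝ ((Set.range fun j i => M i j) ∪ {b}) :=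
    Submodule.subset_span (Or.inr rfl)
  have hM : M.mulVec y ∈ Submodule.span ℝ ((Set.range fun j i => M i j) ∪ {b}) := by
    have : M.mulVec y = ∑ j, y j • (fun i => M i j) := by
      funext i
      simp [Matrix.mulVec, dotProduct, Finset.sum_apply, mul_comm]
    rw [this]
    exact Submodule.sum_mem _ fun j _ =>
      Submodule.smul_mem _ _ (Submodule.subset_span (Or.inl ⟨j, rfl⟩))
  exact Submodule.sub_mem _ hM hb

/-- Quasi-optimality of sketched least squares: if `S` is an `ε`-subspace embedding for the
span of the columns of `M` together with `b`, and `y*` minimizes `y ↦ ‖S(My − b)‖₂`, then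
`‖M y* − b‖₂ ≤ √((1+ε)/(1−ε)) · ‖M y − b‖₂` for every `y`. -/
theorem sketched_least_squares_quasi_optimal {n k s : ℕ}
    (M : Matrix (Fin n) (Fin k) ℝ) (b : Fin n → ℝ)
    (ε : ℝ) (hε0 : 0 ≤ ε) (hε1 : ε < 1)
    (S : Matrix (Fin s) (Fin n) ℝ)
    (V : Submodule ℝ (Fin n → ℝ))
    (hV : V = Submodule.span ℝ ((Set.range fun j i => M i j) ∪ {b}))
    (hS : ∀ v ∈ V, (1 - ε) * euclNorm v ^ 2 ≤ euclNorm (S.mulVec v) ^ 2 ∧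
      euclNorm (S.mulVec v) ^ 2 ≤ (1 + ε) * euclNorm v ^ 2)
    (ystar : Fin k → ℝ)
    (hmin : ∀ y : Fin k → ℝ,
      euclNorm (S.mulVec (M.mulVec ystar - b)) ≤ euclNorm (S.mulVec (M.mulVec y - b))) :
    ∀ y : Fin k → ℝ,
      euclNorm (M.mulVec ystar - b)
        ≤ Real.sqrt ((1 + ε) / (1 - ε)) * euclNorm (M.mulVec y - b) := by
  intro y
  have hmem1 : M.mulVec ystar - b ∈ V := hV ▸ residual_mem M b ystar
  have hmem2 : M.mulVec y - b ∈ V := hV ▸ residual_mem M b y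
  obtain ⟨h1, _⟩ := hS _ hmem1
  obtain ⟨_, h2⟩ := hS _ hmem2
  have hε : 0 < 1 - ε := by linarith
  have hsq : euclNorm (S.mulVec (M.mulVec ystar - b)) ^ 2
      ≤ euclNorm (S.mulVec (M.mulVec y - b)) ^ 2 :=
    pow_le_pow_left₀ (euclNorm_nonneg _) (hmin y) 2
  have key : (1 - ε) * euclNorm (M.mulVec ystar - b) ^ 2
      ≤ (1 + ε) * euclNorm (M.mulVec y - b) ^ 2 := by linarith
  have key2 : euclNorm (M.mulVec ystar - b) ^ 2
      ≤ (1 + ε) / (1 - ε) * euclNorm (M.mulVec y - b) ^ 2 := by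
    rw [div_mul_eq_mul_div, le_div_iff₀ hε]
    linarith
  calc euclNorm (M.mulVec ystar - b)
      = Real.sqrt (euclNorm (M.mulVec ystar - b) ^ 2) := by
        rw [Real.sqrt_sq (euclNorm_nonneg _)]
    _ ≤ Real.sqrt ((1 + ε) / (1 - ε) * euclNorm (M.mulVec y - b) ^ 2) :=
        Real.sqrt_le_sqrt key2
    _ = Real.sqrt ((1 + ε) / (1 - ε)) * euclNorm (M.mulVec y - b) := by
        rw [Real.sqrt_mul (by positivity), Real.sqrt_sq (euclNorm_nonneg _)]
end

section
/- Let H̲_k ∈ ℝ^{(k+1)×k} be the block matrix whose top k×k block is H_k and whose last row is h·e_kᵀ for a scalar h. Let T_{k+1} ∈ ℝ^{(k+1)×(k+1)} be an invertible upper triangular matrix whose leading principal k×k submatrix is T_k, whose first k entries of the last column form the vector t ∈ ℝ^k, and whose (k+1,k+1) entry is τ_{k+1}; write τ_k for the (k,k) entry of T_k. Then T_{k+1} H̲_k T_k⁻¹ is the (k+1)×k matrix whose top k×k block equals T_k H_k T_k⁻¹ + (h/τ_k)·t·e_kᵀ and whose last row equals (τ_{k+1} h/τ_k)·e_kᵀ.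 -/
open Matrix

/-- Block identity behind the sketched Arnoldi relation.  Here the "k" of the informal
statement is `k + 1`: `H̲` is a `(k+2)×(k+1)` matrix whose top `(k+1)×(k+1)` block is `Hk` and
whose last row is `h·e_{k+1}ᵀ`; `T` is an invertible upper triangular `(k+2)×(k+2)` matrix with
leading principal `(k+1)×(k+1)` submatrix `Tk`, last-column entries `t` (above the diagonal)
and bottom-right entry `τk1`, and `τk` is the bottom-right entry of `Tk`.  Then
`T H̲ Tk⁻¹` has top block `Tk Hk Tk⁻¹ + (h/τk)·t·e_{k+1}ᵀ` and last row `(τk1 h/τk)·e_{k+1}ᵀ`. -/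
theorem whitened_arnoldi_block_identity {k : ℕ}
    (Hb : Matrix (Fin (k + 2)) (Fin (k + 1)) ℝ)
    (Hk : Matrix (Fin (k + 1)) (Fin (k + 1)) ℝ) (h : ℝ)
    (hHtop : ∀ i j : Fin (k + 1), Hb i.castSucc j = Hk i j)
    (hHbot : ∀ j : Fin (k + 1),
      Hb (Fin.last (k + 1)) j = h * (Pi.single (Fin.last k) 1 : Fin (k + 1) → ℝ) j)
    (T : Matrix (Fin (k + 2)) (Fin (k + 2)) ℝ)
    (hTri : ∀ i j : Fin (k + 2), j < i → T i j = 0)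
    (hT : IsUnit T)
    (Tk : Matrix (Fin (k + 1)) (Fin (k + 1)) ℝ)
    (hTk : Tk = T.submatrix Fin.castSucc Fin.castSucc)
    (t : Fin (k + 1) → ℝ)
    (ht : ∀ i : Fin (k + 1), t i = T i.castSucc (Fin.last (k + 1)))
    (τk τk1 : ℝ)
    (hτk : τk = Tk (Fin.last k) (Fin.last k))
    (hτk1 : τk1 = T (Fin.last (k + 1)) (Fin.last (k + 1))) :
    (∀ i j : Fin (k + 1),
      (T * Hb * Tk⁻¹) i.castSucc j
        = (Tk * Hk * Tk⁻¹) i j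
          + (h / τk) * (t i * (Pi.single (Fin.last k) 1 : Fin (k + 1) → ℝ) j)) ∧
    (∀ j : Fin (k + 1),
      (T * Hb * Tk⁻¹) (Fin.last (k + 1)) j
        = (τk1 * h / τk) * (Pi.single (Fin.last k) 1 : Fin (k + 1) → ℝ) j) := by
  -- T is upper triangular
  have hTtri : T.BlockTriangular id := fun i j hij => hTri i j hij
  -- Tk is upper triangular
  have hTkTri : Tk.BlockTriangular id := by
    intro i j hij
    rw [hTk]
    exact hTri _ _ (by simpa using hij)
  -- determinant facts
  have hdetT : T.det ≠ 0 := by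
    have := (Matrix.isUnit_iff_isUnit_det T).mp hT
    exact this.ne_zero
  have hdetTform : T.det = ∏ i : Fin (k + 2), T i i := Matrix.det_of_upperTriangular hTtri
  have hdiag : ∀ i : Fin (k + 2), T i i ≠ 0 := by
    intro i
    have : (∏ i : Fin (k + 2), T i i) ≠ 0 := hdetTform ▸ hdetT
    exact Finset.prod_ne_zero_iff.mp this i (Finset.mem_univ i)
  have hdetTk : Tk.det ≠ 0 := by
    have : Tk.det = ∏ i : Fin (k + 1), Tk i i := Matrix.det_of_upperTriangular hTkTri
    rw [this]
    refine Finset.prod_ne_zero_iff.mpr fun i _ => ?_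
    rw [hTk]
    exact hdiag i.castSucc
  have hτkne : τk ≠ 0 := by
    rw [hτk, hTk]
    exact hdiag (Fin.last k).castSucc
  have hUnitTk : IsUnit Tk.det := isUnit_iff_ne_zero.mpr hdetTk
  haveI : Invertible Tk := Tk.invertibleOfIsUnitDet hUnitTk
  have hInvTri : Tk⁻¹.BlockTriangular id :=
    Matrix.blockTriangular_inv_of_blockTriangular hTkTri
  -- last row of Tk⁻¹
  have hrow : ∀ j : Fin (k + 1),
      Tk⁻¹ (Fin.last k) j = τk⁻¹ * (Pi.single (Fin.last k) 1 : Fin (k + 1) → ℝ) j := by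
    intro j
    rcases lt_or_eq_of_le (Fin.le_last j) with hj | hj
    · have h0 : Tk⁻¹ (Fin.last k) j = 0 := hInvTri (by simpa using hj)
      rw [h0, Pi.single_apply, if_neg (Fin.ne_of_lt hj), mul_zero]
    · subst hj
      have h1 : (Tk⁻¹ * Tk) (Fin.last k) (Fin.last k) = 1 := by
        rw [Matrix.nonsing_inv_mul Tk hUnitTk, Matrix.one_apply_eq]
      rw [Matrix.mul_apply] at h1
      rw [Finset.sum_eq_single (Fin.last k)] at h1
      · rw [Pi.single_eq_same, mul_one, hτk]
        exact eq_inv_of_mul_eq_one_left h1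
      · intro b _ hb
        have : Tk⁻¹ (Fin.last k) b = 0 :=
          hInvTri (by simpa using lt_of_le_of_ne (Fin.le_last b) hb)
        rw [this, zero_mul]
      · intro hmem; exact absurd (Finset.mem_univ _) hmem
  -- entries of T * Hb
  have hTHtop : ∀ (i j : Fin (k + 1)),
      (T * Hb) i.castSucc j
        = (Tk * Hk) i j + t i * (h * (Pi.single (Fin.last k) 1 : Fin (k + 1) → ℝ) j) := by
    intro i j
    rw [Matrix.mul_apply, Fin.sum_univ_castSucc, Matrix.mul_apply]
    congr 1
    · refine Finset.sum_congr rfl fun m _ => ?_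
      rw [hHtop, hTk, Matrix.submatrix_apply]
    · rw [hHbot, ht]
  have hTHbot : ∀ j : Fin (k + 1),
      (T * Hb) (Fin.last (k + 1)) j
        = τk1 * (h * (Pi.single (Fin.last k) 1 : Fin (k + 1) → ℝ) j) := by
    intro j
    rw [Matrix.mul_apply, Fin.sum_univ_castSucc]
    have hz : ∀ m : Fin (k + 1),
        T (Fin.last (k + 1)) m.castSucc * Hb m.castSucc j = 0 := by
      intro m
      rw [hTri _ _ (Fin.castSucc_lt_last m), zero_mul]
    rw [Finset.sum_congr rfl fun m _ => hz m, Finset.sum_const_zero, zero_add,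
      hHbot, hτk1]
  -- sum of Pi.single against a function
  have hsingle : ∀ (f : Fin (k + 1) → ℝ),
      (∑ m : Fin (k + 1), (Pi.single (Fin.last k) 1 : Fin (k + 1) → ℝ) m * f m)
        = f (Fin.last k) := by
    intro f
    rw [Finset.sum_eq_single (Fin.last k)]
    · rw [Pi.single_eq_same, one_mul]
    · intro b _ hb; rw [Pi.single_eq_of_ne hb, zero_mul]
    · intro hmem; exact absurd (Finset.mem_univ _) hmem
  constructor
  · intro i j
    rw [Matrix.mul_apply]
    have : ∀ m : Fin (k + 1),
        (T * Hb) i.castSucc m * Tk⁻¹ m j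
          = (Tk * Hk) i m * Tk⁻¹ m j
            + t i * h * ((Pi.single (Fin.last k) 1 : Fin (k + 1) → ℝ) m * Tk⁻¹ m j) := by
      intro m; rw [hTHtop]; ring
    rw [Finset.sum_congr rfl fun m _ => this m, Finset.sum_add_distrib,
      ← Finset.mul_sum, hsingle (fun m => Tk⁻¹ m j), hrow, Matrix.mul_apply]
    field_simp
  · intro j
    rw [Matrix.mul_apply]
    have : ∀ m : Fin (k + 1),
        (T * Hb) (Fin.last (k + 1)) m * Tk⁻¹ m j
          = τk1 * h * ((Pi.single (Fin.last k) 1 : Fin (k + 1) → ℝ) m * Tk⁻¹ m j) := by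
      intro m; rw [hTHbot]; ring
    rw [Finset.sum_congr rfl fun m _ => this m, ← Finset.mul_sum,
      hsingle (fun m => Tk⁻¹ m j), hrow]
    field_simp
end

section
/- Let A ∈ ℝ^{n×n}, let V_{k+1} ∈ ℝ^{n×(k+1)} have first k columns V_k and first column v₁, and let H̲_k ∈ ℝ^{(k+1)×k} satisfy the Arnoldi relation A V_k = V_{k+1} H̲_k. Let S ∈ ℝ^{s×n} and suppose S V_{k+1} = Q_{k+1} T_{k+1}, where Q_{k+1} ∈ ℝ^{s×(k+1)} has orthonormal columns and T_{k+1} ∈ ℝ^{(k+1)×(k+1)} is upper triangular with strictly positive diagonal entries; let T_k be the leading principal k×k submatrix of T_{k+1}. Let r₀ = ‖r₀‖₂ · v₁. Then with β = ‖S r₀‖₂ and M = T_{k+1} H̲_k T_k⁻¹, for every y ∈ ℝ^k one has ‖S(A V_k y − r₀)‖₂ = ‖M (T_k y) − β e₁‖₂. -/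
open Matrix

lemma euclNorm_eq_sqrt_dot {p : ℕ} (v : Fin p → ℝ) :
    euclNorm v = Real.sqrt (v ⬝ᵥ v) := by
  unfold euclNorm
  congr 1
  simp [dotProduct, sq]

lemma euclNorm_mulVec_orth {s m : ℕ} (Q : Matrix (Fin s) (Fin m) ℝ)
    (hQ : Qᵀ * Q = 1) (x : Fin m → ℝ) :
    euclNorm (Q.mulVec x) = euclNorm x := by
  rw [euclNorm_eq_sqrt_dot, euclNorm_eq_sqrt_dot]
  congr 1
  calc Q.mulVec x ⬝ᵥ Q.mulVec x = (Q.mulVec x ᵥ* Q) ⬝ᵥ x := Matrix.dotProduct_mulVec _ _ _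
    _ = (Qᵀ *ᵥ (Q *ᵥ x)) ⬝ᵥ x := by rw [Matrix.mulVec_transpose]
    _ = ((Qᵀ * Q) *ᵥ x) ⬝ᵥ x := by rw [Matrix.mulVec_mulVec]
    _ = x ⬝ᵥ x := by rw [hQ, Matrix.one_mulVec]

lemma euclNorm_smul_single {m : ℕ} (a : ℝ) :
    euclNorm (a • (Pi.single 0 1 : Fin (m + 1) → ℝ)) = |a| := by
  unfold euclNorm
  have h : ∑ i, (a • (Pi.single 0 1 : Fin (m + 1) → ℝ)) i ^ 2 = a ^ 2 := by
    rw [Fintype.sum_eq_single (0 : Fin (m + 1))]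
    · simp
    · intro i hi; simp [Pi.single_eq_of_ne hi]
  rw [h, Real.sqrt_sq_eq_abs]

/-- Sketched residual identity after whitening: under the Arnoldi relation
`A V_k = V_{k+1} H̲_k`, a QR factorization `S V_{k+1} = Q_{k+1} T_{k+1}` with `Q_{k+1}` having
orthonormal columns and `T_{k+1}` upper triangular with positive diagonal, and `r₀ = ‖r₀‖₂ v₁`,
setting `β = ‖S r₀‖₂` and `M = T_{k+1} H̲_k T_k⁻¹`, one has
`‖S(A V_k y − r₀)‖₂ = ‖M (T_k y) − β e₁‖₂` for every `y ∈ ℝ^k`. -/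
theorem sketched_residual_identity {n k s : ℕ}
    (A : Matrix (Fin n) (Fin n) ℝ)
    (V : Matrix (Fin n) (Fin (k + 1)) ℝ)
    (Vk : Matrix (Fin n) (Fin k) ℝ)
    (hVk : Vk = V.submatrix id Fin.castSucc)
    (Hb : Matrix (Fin (k + 1)) (Fin k) ℝ)
    (hArn : A * Vk = V * Hb)
    (S : Matrix (Fin s) (Fin n) ℝ)
    (Q : Matrix (Fin s) (Fin (k + 1)) ℝ) (hQ : Qᵀ * Q = 1)
    (T : Matrix (Fin (k + 1)) (Fin (k + 1)) ℝ)
    (hTri : ∀ i j : Fin (k + 1), j < i → T i j = 0)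
    (hTdiag : ∀ i : Fin (k + 1), 0 < T i i)
    (hQR : S * V = Q * T)
    (Tk : Matrix (Fin k) (Fin k) ℝ)
    (hTk : Tk = T.submatrix Fin.castSucc Fin.castSucc)
    (r₀ : Fin n → ℝ) (hr : r₀ = euclNorm r₀ • (fun i => V i 0))
    (β : ℝ) (hβ : β = euclNorm (S.mulVec r₀))
    (M : Matrix (Fin (k + 1)) (Fin k) ℝ) (hM : M = T * Hb * Tk⁻¹) :
    ∀ y : Fin k → ℝ,
      euclNorm (S.mulVec ((A * Vk).mulVec y - r₀))
        = euclNorm (M.mulVec (Tk.mulVec y) - β • (Pi.single 0 1 : Fin (k + 1) → ℝ)) := by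
  intro y
  set c : ℝ := euclNorm r₀ with hc
  have hc0 : 0 ≤ c := Real.sqrt_nonneg _
  -- Tk is invertible
  have hTkTri : Tk.BlockTriangular id := by
    intro i j hij
    rw [hTk]
    exact hTri _ _ (by simpa using hij)
  have hTkdet : Tk.det = ∏ i, Tk i i := Matrix.det_of_upperTriangular hTkTri
  have hTkdet_pos : 0 < Tk.det := by
    rw [hTkdet]
    exact Finset.prod_pos fun i _ => by rw [hTk]; exact hTdiag _
  have hTkUnit : IsUnit Tk.det := isUnit_iff_ne_zero.mpr (ne_of_gt hTkdet_pos)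
  -- V e₀ is the first column
  have hVe : V.mulVec (Pi.single 0 1) = fun i => V i 0 := by
    funext i
    simp [Matrix.mulVec_single]
  -- T e₀ = T 0 0 • e₀
  have hTe : T.mulVec (Pi.single 0 1) = (T 0 0) • (Pi.single 0 1 : Fin (k + 1) → ℝ) := by
    funext i
    by_cases hi : i = 0
    · subst hi; simp [Matrix.mulVec_single]
    · have h0i : (0 : Fin (k + 1)) < i := Fin.pos_iff_ne_zero.mpr hi
      simp [Matrix.mulVec_single, hTri i 0 h0i, Pi.single_eq_of_ne hi]
  -- S r₀ = Q ((c * T 0 0) • e₀)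
  have hSr : S.mulVec r₀ = Q.mulVec ((c * T 0 0) • (Pi.single 0 1 : Fin (k + 1) → ℝ)) := by
    have hr' : r₀ = c • V.mulVec (Pi.single 0 1) := by rw [hVe]; exact hr
    calc S.mulVec r₀ = S.mulVec (c • V.mulVec (Pi.single 0 1)) := by rw [← hr']
      _ = c • (S * V).mulVec (Pi.single 0 1) := by
          rw [Matrix.mulVec_smul, Matrix.mulVec_mulVec]
      _ = c • Q.mulVec (T.mulVec (Pi.single 0 1)) := by
          rw [hQR, ← Matrix.mulVec_mulVec]
      _ = Q.mulVec ((c * T 0 0) • (Pi.single 0 1 : Fin (k + 1) → ℝ)) := by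
          rw [hTe, Matrix.mulVec_smul, smul_smul, ← Matrix.mulVec_smul]
  -- β = c * T 0 0
  have hβval : β = c * T 0 0 := by
    rw [hβ, hSr, euclNorm_mulVec_orth Q hQ, euclNorm_smul_single]
    exact abs_of_nonneg (mul_nonneg hc0 (le_of_lt (hTdiag 0)))
  have hSr' : S.mulVec r₀ = Q.mulVec (β • (Pi.single 0 1 : Fin (k + 1) → ℝ)) := by
    rw [hSr, hβval]
  -- M (Tk y) = (T * Hb) y
  have hMTk : M.mulVec (Tk.mulVec y) = (T * Hb).mulVec y := by
    rw [hM, Matrix.mulVec_mulVec, Matrix.mul_assoc (T * Hb) Tk⁻¹ Tk,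
      Matrix.nonsing_inv_mul Tk hTkUnit, Matrix.mul_one]
  -- LHS vector = Q applied to RHS vector
  have hLHS : S.mulVec ((A * Vk).mulVec y - r₀)
      = Q.mulVec ((T * Hb).mulVec y - β • (Pi.single 0 1 : Fin (k + 1) → ℝ)) := by
    rw [Matrix.mulVec_sub, Matrix.mulVec_sub, hSr', hArn, Matrix.mulVec_mulVec,
      ← Matrix.mul_assoc, hQR, Matrix.mul_assoc, ← Matrix.mulVec_mulVec]
  rw [hLHS, euclNorm_mulVec_orth Q hQ, hMTk]
end

section
/- Let A ∈ ℝ^{m×n}, X ∈ ℝ^{n×r}, and Y ∈ ℝ^{m×ℓ}, and let G ∈ ℝ^{r×ℓ} satisfy the four Moore–Penrose conditions for B = Yᵀ A X, namely B G B = B, G B G = G, (B G)ᵀ = B G, and (G B)ᵀ = G B. If rank(Yᵀ A X) = rank(A), then A X G Yᵀ A = A. -/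
open Matrix

/-- If every column of `N` lies in the column space of `M`, then `N = M * C` for some `C`. -/
lemma exists_factor {m n k : ℕ} (M : Matrix (Fin m) (Fin n) ℝ) (N : Matrix (Fin m) (Fin k) ℝ)
    (h : LinearMap.range N.mulVecLin ≤ LinearMap.range M.mulVecLin) :
    ∃ C : Matrix (Fin n) (Fin k) ℝ, M * C = N := by
  have hcol : ∀ j : Fin k, ∃ c : Fin n → ℝ, M.mulVec c = fun i => N i j := by
    intro j
    have : (fun i => N i j) ∈ LinearMap.range N.mulVecLin := by
      refine ⟨Pi.single j 1, ?_⟩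
      ext i
      simp [Matrix.mulVecLin_apply, Matrix.mulVec_single]
    exact h this
  choose c hc using hcol
  refine ⟨Matrix.of fun i j => c j i, ?_⟩
  ext i j
  have := congrFun (hc j) i
  simpa [Matrix.mul_apply, Matrix.mulVec, dotProduct] using this

lemma rank_le_factor {m n k : ℕ} (M : Matrix (Fin m) (Fin n) ℝ) (N : Matrix (Fin n) (Fin k) ℝ)
    (h : (M * N).rank = M.rank) :
    ∃ C : Matrix (Fin k) (Fin n) ℝ, (M * N) * C = M := by
  apply exists_factor
  have hle : LinearMap.range M.mulVecLin ≤ LinearMap.range (M * N).mulVecLin := by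
    have hsub : LinearMap.range (M * N).mulVecLin ≤ LinearMap.range M.mulVecLin := by
      rw [Matrix.mulVecLin_mul]
      exact LinearMap.range_comp_le_range _ _
    have := Submodule.eq_of_le_of_finrank_le hsub (by
      simpa [Matrix.rank] using h.ge)
    exact this.ge
  exact hle

/-- Exactness of the two-sided (generalized Nyström) sketched approximation: if `G` is the
Moore–Penrose pseudoinverse of `B = Yᵀ A X` (characterized by the four Penrose conditions)
and `rank(Yᵀ A X) = rank(A)`, then `A X G Yᵀ A = A`. -/
theorem generalized_nystrom_exact {m n r l : ℕ}
    (A : Matrix (Fin m) (Fin n) ℝ)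
    (X : Matrix (Fin n) (Fin r) ℝ)
    (Y : Matrix (Fin m) (Fin l) ℝ)
    (G : Matrix (Fin r) (Fin l) ℝ)
    (h1 : (Yᵀ * A * X) * G * (Yᵀ * A * X) = Yᵀ * A * X)
    (h2 : G * (Yᵀ * A * X) * G = G)
    (h3 : ((Yᵀ * A * X) * G)ᵀ = (Yᵀ * A * X) * G)
    (h4 : (G * (Yᵀ * A * X))ᵀ = G * (Yᵀ * A * X))
    (hrank : (Yᵀ * A * X).rank = A.rank) :
    A * X * G * Yᵀ * A = A := by
  -- rank (A*X) = rank A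
  have hAX : (A * X).rank = A.rank := by
    refine le_antisymm (Matrix.rank_mul_le_left A X) ?_
    calc A.rank = (Yᵀ * A * X).rank := hrank.symm
    _ = (Yᵀ * (A * X)).rank := by rw [Matrix.mul_assoc]
    _ ≤ (A * X).rank := Matrix.rank_mul_le_right _ _
  obtain ⟨C, hC⟩ := rank_le_factor A X hAX
  -- rank (Aᵀ * Y) = rank Aᵀ
  have hYA : (Aᵀ * Y).rank = Aᵀ.rank := by
    refine le_antisymm (Matrix.rank_mul_le_left Aᵀ Y) ?_
    have h1' : (Aᵀ * Y).rank = (Yᵀ * A).rank := by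
      rw [← Matrix.rank_transpose (Yᵀ * A), Matrix.transpose_mul, Matrix.transpose_transpose]
    rw [Matrix.rank_transpose, h1']
    calc A.rank = (Yᵀ * A * X).rank := hrank.symm
    _ ≤ (Yᵀ * A).rank := Matrix.rank_mul_le_left _ _
  obtain ⟨E, hE⟩ := rank_le_factor Aᵀ Y hYA
  have hD : Eᵀ * (Yᵀ * A) = A := by
    have := congrArg Matrix.transpose hE
    simpa [Matrix.transpose_mul, Matrix.mul_assoc] using this
  set B := Yᵀ * A * X with hB
  have hYA2 : Yᵀ * A = B * C := by
    conv_lhs => rw [← hC]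
    rw [hB]; simp only [Matrix.mul_assoc]
  have hAX2 : A * X = Eᵀ * B := by
    conv_lhs => rw [← hD]
    rw [hB]; simp only [Matrix.mul_assoc]
  have key : A * X * G * (Yᵀ * A) = A := by
    calc A * X * G * (Yᵀ * A) = Eᵀ * B * G * (B * C) := by rw [hAX2, hYA2]
    _ = Eᵀ * (B * G * B) * C := by simp only [Matrix.mul_assoc]
    _ = Eᵀ * (B * C) := by rw [h1]; simp only [Matrix.mul_assoc]
    _ = Eᵀ * (Yᵀ * A) := by rw [hYA2]
    _ = A := hD
  rw [Matrix.mul_assoc (A * X * G)]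
  exact key
end
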